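/- Let p ≥ 1 and let a, b be precision-p binary floating-point numbers with |a| ≥ |b|, let RN be a round-to-nearest function for precision p, and set x = RN(a + b). Then x − a is itself a precision-p binary floating-point number; in particular RN(x − a) = x − a. -/
import Mathlib


/-- A precision-`p` binary floating-point number (unbounded exponent):
a real of the form `m * 2 ^ e` with `m e : ℤ` and `|m| < 2 ^ p`. -/
def FloatRep (p : ℕ) (x : ℝ) : Prop :=
  ∃ m e : ℤ, |m| < 2 ^ p ∧ x = (m : ℝ) * (2 : ℝ) ^ e

/-- `RN` is a round-to-nearest function for precision `p`: `RN x` is a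
precision-`p` float and is at least as close to `x` as any precision-`p`
float (ties broken arbitrarily). -/
def IsRoundNearest (p : ℕ) (RN : ℝ → ℝ) : Prop :=
  ∀ x : ℝ, FloatRep p (RN x) ∧ ∀ f : ℝ, FloatRep p f → |RN x - x| ≤ |f - x|

/-- For nonzero `x`, `ulp x = 2 ^ (⌊log₂ |x|⌋ - p + 1)`. -/
noncomputable def ulp (p : ℕ) (x : ℝ) : ℝ :=
  (2 : ℝ) ^ (Int.log 2 |x| - (p : ℤ) + 1)

lemma two_zpow_pos (e : ℤ) : (0:ℝ) < 2 ^ e := zpow_pos (by norm_num) e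

lemma zpow_add2 (a b : ℤ) : (2:ℝ)^(a+b) = 2^a * 2^b := zpow_add₀ two_ne_zero a b

lemma zpow_lt_iff {a b : ℤ} : (2:ℝ) ^ a < 2 ^ b ↔ a < b :=
  zpow_lt_zpow_iff_right₀ (by norm_num)

lemma mult_shift (k e e' : ℤ) (h : e' ≤ e) :
    ∃ k' : ℤ, (k:ℝ) * 2 ^ e = (k':ℝ) * 2 ^ e' := by
  refine ⟨k * 2 ^ (e - e').toNat, ?_⟩
  push_cast
  rw [mul_assoc, ← zpow_natCast (2:ℝ), Int.toNat_of_nonneg (by omega), ← zpow_add₀ two_ne_zero]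
  congr 2
  omega

lemma one_lt_two_pow_int (p : ℕ) (hp : 1 ≤ p) : (1:ℤ) < 2 ^ p := by
  calc (1:ℤ) < 2 ^ 1 := by norm_num
    _ ≤ 2 ^ p := pow_le_pow_right₀ (by norm_num) hp

lemma floatRep_zero (p : ℕ) : FloatRep p 0 :=
  ⟨0, 0, by simpa using pow_pos (by norm_num : (0:ℤ) < 2) p, by norm_num⟩

lemma zpowp (p : ℕ) : (2:ℝ) ^ ((p:ℤ)) = ((2 ^ p : ℤ) : ℝ) := by
  push_cast
  exact zpow_natCast 2 p

lemma floatRep_of_le (p : ℕ) (hp : 1 ≤ p) (k e : ℤ) (hk : |k| ≤ 2 ^ p) :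
    FloatRep p ((k : ℝ) * 2 ^ e) := by
  rcases lt_or_eq_of_le hk with h | h
  · exact ⟨k, e, h, rfl⟩
  · have h2 : (1:ℤ) < 2 ^ p := by
      calc (1:ℤ) < 2 ^ 1 := by norm_num
      _ ≤ 2 ^ p := pow_le_pow_right₀ (by norm_num) hp
    rcases (abs_eq (by positivity : (0:ℤ) ≤ 2 ^ p)).mp h with hk' | hk'
    · refine ⟨1, e + p, by simpa using h2, ?_⟩
      subst hk'
      rw [zpow_add2, zpowp]
      push_cast
      ring
    · refine ⟨-1, e + p, by simpa using h2, ?_⟩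
      subst hk'
      rw [zpow_add2, zpowp]
      push_cast
      ring

lemma rn_fix (p : ℕ) (RN : ℝ → ℝ) (hRN : IsRoundNearest p RN) (f : ℝ)
    (hf : FloatRep p f) : RN f = f := by
  have h := (hRN f).2 f hf
  simp only [sub_self, abs_zero] at h
  have := abs_nonneg (RN f - f)
  have h0 : |RN f - f| = 0 := le_antisymm h this
  have := abs_eq_zero.mp h0
  linarith

lemma rn_half_ulp (p : ℕ) (hp : 1 ≤ p) (RN : ℝ → ℝ) (hRN : IsRoundNearest p RN)
    (t : ℝ) (ht : t ≠ 0) :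
    |RN t - t| ≤ 2 ^ (Int.log 2 |t| - p) := by
  set E := Int.log 2 |t| with hE
  set g : ℤ := E - p + 1 with hg
  have hgp : (0:ℝ) < 2 ^ g := two_zpow_pos g
  set y : ℝ := t / 2 ^ g with hy
  set k0 : ℤ := ⌊y + 1/2⌋ with hk0
  have habs : |t| < 2 ^ (E + 1) := Int.lt_zpow_succ_log_self one_lt_two |t|
  have hyabs : |y| < 2 ^ (p:ℤ) := by
    rw [hy, abs_div, abs_of_pos hgp, div_lt_iff₀ hgp, ← zpow_add2]
    have : (p:ℤ) + g = E + 1 := by omega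
    rw [this]; exact habs
  have hfl : k0 ≤ y + 1/2 := Int.floor_le _
  have hfu : y + 1/2 < k0 + 1 := Int.lt_floor_add_one _
  have hk0abs : |k0| ≤ 2 ^ p := by
    have h1 : (k0:ℝ) ≤ 2 ^ (p:ℤ) + 1/2 := by
      have := (abs_lt.mp hyabs).2; linarith
    have h2 : -((2:ℝ) ^ (p:ℤ)) - 3/2 < (k0:ℝ) - 1 := by
      have := (abs_lt.mp hyabs).1; linarith
    have h1' : (k0:ℝ) < ((2 ^ p : ℤ) : ℝ) + 1 := by rw [← zpowp]; linarith
    have h2' : ((-(2 ^ p) - 1 : ℤ) : ℝ) < (k0:ℝ) := by push_cast; rw [← zpow_natCast (2:ℝ) p]; linarith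
    have hA : k0 < 2 ^ p + 1 := by exact_mod_cast h1'
    have hB : -(2 ^ p) - 1 < k0 := by exact_mod_cast h2'
    rw [abs_le]; omega
  have hfloat := floatRep_of_le p hp k0 g hk0abs
  have hle := (hRN t).2 _ hfloat
  have hdist : |(k0:ℝ) * 2 ^ g - t| ≤ 2 ^ (E - p) := by
    have hteq : t = y * 2 ^ g := by rw [hy]; field_simp
    have : |(k0:ℝ) * 2 ^ g - t| = |(k0:ℝ) - y| * 2 ^ g := by
      rw [hteq, ← sub_mul, abs_mul, abs_of_pos hgp]
    rw [this]
    have hky : |(k0:ℝ) - y| ≤ 1/2 := by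
      rw [abs_le]; constructor <;> [linarith; linarith]
    have h2 : (2:ℝ) ^ (E - (p:ℤ)) = (1/2) * 2 ^ g := by
      rw [hg]
      rw [show E - (p:ℤ) + 1 = (E - (p:ℤ)) + 1 by ring, zpow_add2]
      ring
    rw [h2]
    exact mul_le_mul_of_nonneg_right hky hgp.le |>.trans_eq rfl
  exact hle.trans hdist

lemma abs_float_eq (m : ℤ) (e : ℤ) : |(m:ℝ) * 2 ^ e| = |(m:ℝ)| * 2 ^ e := by
  rw [abs_mul, abs_of_pos (two_zpow_pos e)]

lemma float_mult (p : ℕ) (f : ℝ) (hf : FloatRep p f) (E : ℤ) (hE : (2:ℝ) ^ E ≤ |f|) :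
    ∃ k : ℤ, f = (k:ℝ) * 2 ^ (E - p + 1) := by
  obtain ⟨m, e, hm, rfl⟩ := hf
  have hmR : |(m:ℝ)| < (2:ℝ) ^ (p:ℤ) := by
    rw [zpowp]; exact_mod_cast hm
  have h1 : |(m:ℝ)| * 2 ^ e < 2 ^ ((p:ℤ) + e) := by
    rw [zpow_add2]
    exact mul_lt_mul_of_pos_right hmR (two_zpow_pos e)
  have h2 : (2:ℝ) ^ E < 2 ^ ((p:ℤ) + e) := lt_of_le_of_lt (by rwa [abs_float_eq] at hE) h1
  exact mult_shift m e _ (by have := zpow_lt_iff.mp h2; omega)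

lemma rn_grid (p : ℕ) (hp : 1 ≤ p) (RN : ℝ → ℝ) (hRN : IsRoundNearest p RN)
    (k e : ℤ) (t : ℝ) (htk : t = (k:ℝ) * 2 ^ e)
    (hbig : (2:ℝ) ^ ((p:ℤ) + e) ≤ |t|) :
    ∃ k' : ℤ, RN t = (k':ℝ) * 2 ^ (e + 1) := by
  have ht0 : t ≠ 0 := by
    intro h; rw [h, abs_zero] at hbig; exact absurd hbig (not_le.mpr (two_zpow_pos _))
  set E := Int.log 2 |t| with hEdef
  have hEl : (2:ℝ) ^ E ≤ |t| := Int.zpow_log_le_self one_lt_two (abs_pos.mpr ht0)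
  have hEu : |t| < 2 ^ (E + 1) := Int.lt_zpow_succ_log_self one_lt_two |t|
  have hpe : (p:ℤ) + e ≤ E := by
    have := zpow_lt_iff.mp (lt_of_le_of_lt hbig hEu); omega
  obtain ⟨hs_float, _⟩ := hRN t
  have hhalf : |RN t - t| ≤ 2 ^ (E - p) := rn_half_ulp p hp RN hRN t ht0
  by_cases hcase : (2:ℝ) ^ E ≤ |RN t|
  · obtain ⟨k', hk'⟩ := float_mult p (RN t) hs_float E hcase
    obtain ⟨k'', hk''⟩ := mult_shift k' (E - p + 1) (e + 1) (by omega)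
    exact ⟨k'', by rw [hk', hk'']⟩
  · push_neg at hcase
    have hA : (2:ℝ) ^ E = 2 ^ (p:ℤ) * 2 ^ (E - (p:ℤ)) := by
      rw [← zpow_add2]; congr 1; omega
    have hp2 : (1:ℝ) < 2 ^ (p:ℤ) := by
      have := zpow_lt_iff.mpr (by omega : (0:ℤ) < (p:ℤ))
      simpa using this
    have hsub : |t| - |RN t| ≤ |RN t - t| := by
      have := abs_sub_abs_le_abs_sub t (RN t)
      rwa [abs_sub_comm] at this
    have hslow : (2:ℝ) ^ (p:ℤ) * 2 ^ (E - (p:ℤ)) - 2 ^ (E - (p:ℤ)) ≤ |RN t| := by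
      rw [← hA]; linarith
    obtain ⟨m, es, hm, hmeq⟩ := hs_float
    have hmR : |(m:ℝ)| ≤ 2 ^ (p:ℤ) - 1 := by
      rw [zpowp]
      have hmz : |m| ≤ 2 ^ p - 1 := by omega
      calc |(m:ℝ)| = ((|m|:ℤ):ℝ) := by push_cast; rfl
        _ ≤ ((2^p - 1 : ℤ):ℝ) := by exact_mod_cast hmz
        _ = ((2^p : ℤ):ℝ) - 1 := by push_cast; ring
    have habs_s : |RN t| = |(m:ℝ)| * 2 ^ es := by rw [hmeq, abs_float_eq]
    have hges : E - (p:ℤ) ≤ es := by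
      by_contra hlt
      push_neg at hlt
      have h1 : (2:ℝ) ^ es < 2 ^ (E - (p:ℤ)) := zpow_lt_iff.mpr hlt
      have h2 : |(m:ℝ)| * 2 ^ es ≤ (2 ^ (p:ℤ) - 1) * 2 ^ es :=
        mul_le_mul_of_nonneg_right hmR (two_zpow_pos es).le
      nlinarith [two_zpow_pos es, two_zpow_pos (E - (p:ℤ)), habs_s, hslow]
    by_cases hes : e + 1 ≤ es
    · obtain ⟨k'', hk''⟩ := mult_shift m es (e + 1) hes
      exact ⟨k'', by rw [hmeq, hk'']⟩
    · exfalso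
      push_neg at hes
      have heseq : es = e := by omega
      subst heseq
      have hEeq : E = (p:ℤ) + es := by omega
      have hEmp : E - (p:ℤ) = es := by omega
      rw [hEmp] at hslow hhalf
      have hmlow : (2:ℝ) ^ (p:ℤ) - 1 ≤ |(m:ℝ)| := by
        nlinarith [two_zpow_pos es]
      have hmeqv : |(m:ℝ)| = 2 ^ (p:ℤ) - 1 := le_antisymm hmR hmlow
      have htup : |t| ≤ (2:ℝ) ^ ((p:ℤ) + es) := by
        have h1 : |t| ≤ |RN t| + |RN t - t| := by
          have h := abs_sub_abs_le_abs_sub t (RN t)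
          have h2 : |t - RN t| = |RN t - t| := abs_sub_comm t (RN t)
          linarith
        rw [habs_s, hmeqv] at h1
        rw [zpow_add2]
        nlinarith [two_zpow_pos es]
      have hteq : |t| = (2:ℝ) ^ ((p:ℤ) + es) := le_antisymm htup (by rwa [← hEeq, hEeq] at hbig)
      have htf : FloatRep p t := by
        rcases (abs_eq (two_zpow_pos ((p:ℤ)+es)).le).mp hteq with h | h
        · exact ⟨1, (p:ℤ) + es, by simpa using one_lt_two_pow_int p hp, by rw [h]; push_cast; ring⟩
        · exact ⟨-1, (p:ℤ) + es, by simpa using one_lt_two_pow_int p hp, by rw [h]; push_cast; ring⟩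
      have hrnt : RN t = t := rn_fix p RN hRN t htf
      rw [hrnt, hteq] at hcase
      have : (p:ℤ) + es < E := zpow_lt_iff.mp hcase
      omega

lemma canonical (p : ℕ) (x : ℝ) (hx : FloatRep p x) (h0 : x ≠ 0) :
    ∃ m e : ℤ, |m| < 2 ^ p ∧ (2:ℝ) ^ ((p:ℤ) - 1 + e) ≤ |x| ∧ |x| < 2 ^ ((p:ℤ) + e) ∧
      x = (m:ℝ) * 2 ^ e := by
  obtain ⟨m0, e0, hm0, rfl⟩ := hx
  set X : ℝ := (m0:ℝ) * 2 ^ e0 with hX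
  set E := Int.log 2 |X| with hEdef
  set e : ℤ := E - p + 1 with he
  have hEl : (2:ℝ) ^ E ≤ |X| := Int.zpow_log_le_self one_lt_two (abs_pos.mpr h0)
  have hEu : |X| < 2 ^ (E + 1) := Int.lt_zpow_succ_log_self one_lt_two |X|
  have hm0R : |(m0:ℝ)| < (2:ℝ) ^ (p:ℤ) := by rw [zpowp]; exact_mod_cast hm0
  have hup0 : |X| < 2 ^ ((p:ℤ) + e0) := by
    rw [hX, abs_float_eq, zpow_add2]
    exact mul_lt_mul_of_pos_right hm0R (two_zpow_pos e0)
  have hee0 : e ≤ e0 := by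
    have := zpow_lt_iff.mp (lt_of_le_of_lt hEl hup0); omega
  obtain ⟨m, hmeq⟩ := mult_shift m0 e0 e hee0
  have hup : |X| < 2 ^ ((p:ℤ) + e) := by
    have : (p:ℤ) + e = E + 1 := by omega
    rw [this]; exact hEu
  refine ⟨m, e, ?_, ?_, hup, hmeq⟩
  · have h1 : |(m:ℝ)| * 2 ^ e < 2 ^ (p:ℤ) * 2 ^ e := by
      rw [← abs_float_eq, ← hmeq, ← zpow_add2]; exact hup
    have h2 : |(m:ℝ)| < 2 ^ (p:ℤ) := lt_of_mul_lt_mul_right h1 (two_zpow_pos e).le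
    rw [zpowp] at h2
    have : ((|m|:ℤ):ℝ) < ((2^p : ℤ):ℝ) := by push_cast at h2 ⊢; exact h2
    exact_mod_cast this
  · have : (p:ℤ) - 1 + e = E := by omega
    rw [this]; exact hEl

lemma abs_lt_pow_of (p : ℕ) (K e : ℤ) (h : |(K:ℝ) * 2 ^ e| < (2:ℝ) ^ ((p:ℤ) + e)) :
    |K| < 2 ^ p := by
  rw [abs_float_eq, zpow_add2] at h
  have h2 : |(K:ℝ)| < 2 ^ (p:ℤ) := lt_of_mul_lt_mul_right h (two_zpow_pos e).le
  rw [zpowp] at h2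
  have : ((|K|:ℤ):ℝ) < ((2^p:ℤ):ℝ) := by push_cast at h2 ⊢; exact h2
  exact_mod_cast this

lemma abs_le_pow_of (p : ℕ) (K e : ℤ) (h : |(K:ℝ) * 2 ^ e| ≤ (2:ℝ) ^ ((p:ℤ) + e)) :
    |K| ≤ 2 ^ p := by
  rw [abs_float_eq, zpow_add2] at h
  have h2 : |(K:ℝ)| ≤ 2 ^ (p:ℤ) := le_of_mul_le_mul_right h (two_zpow_pos e)
  rw [zpowp] at h2
  have : ((|K|:ℤ):ℝ) ≤ ((2^p:ℤ):ℝ) := by push_cast at h2 ⊢; exact h2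
  exact_mod_cast this

lemma abs_cast_le (p : ℕ) (m : ℤ) (hm : |m| < 2 ^ p) : |(m:ℝ)| ≤ 2 ^ (p:ℤ) - 1 := by
  rw [zpowp]
  have hmz : |m| ≤ 2 ^ p - 1 := by omega
  calc |(m:ℝ)| = ((|m|:ℤ):ℝ) := by push_cast; rfl
    _ ≤ ((2^p - 1 : ℤ):ℝ) := by exact_mod_cast hmz
    _ = ((2^p : ℤ):ℝ) - 1 := by push_cast; ring

/-- In Fast2Sum, `x - a` is itself a precision-`p` float, hence rounds to itself. -/
theorem fast2sum_x_sub_a_exact (p : ℕ) (hp : 1 ≤ p) (RN : ℝ → ℝ)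
    (hRN : IsRoundNearest p RN) (a b : ℝ)
    (ha : FloatRep p a) (hb : FloatRep p b) (hab : |b| ≤ |a|)
    (x : ℝ) (hx : x = RN (a + b)) :
    FloatRep p (x - a) ∧ RN (x - a) = x - a := by
  suffices h : FloatRep p (x - a) by exact ⟨h, rn_fix p RN hRN _ h⟩
  by_cases hb0 : b = 0
  · subst hb0
    rw [hx, add_zero, rn_fix p RN hRN a ha, sub_self]
    exact floatRep_zero p
  have ha0 : a ≠ 0 := by
    intro h; rw [h, abs_zero] at hab
    exact hb0 (abs_eq_zero.mp (le_antisymm hab (abs_nonneg b)))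
  obtain ⟨ma, ea, hma, halow, hahigh, haeq⟩ := canonical p a ha ha0
  obtain ⟨mb, eb, hmb, hblow, hbhigh, hbeq⟩ := canonical p b hb hb0
  have heab : eb ≤ ea := by
    have h1 : (2:ℝ) ^ ((p:ℤ) - 1 + eb) < 2 ^ ((p:ℤ) + ea) :=
      lt_of_le_of_lt (hblow.trans hab) hahigh
    have := zpow_lt_iff.mp h1; omega
  set t : ℝ := a + b with htdef
  -- t is a multiple of 2 ^ eb
  obtain ⟨ka, hka⟩ := mult_shift ma ea eb heab
  have htmult : t = ((ka + mb : ℤ):ℝ) * 2 ^ eb := by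
    rw [htdef, haeq, hbeq, hka]; push_cast; ring
  have hd : |x - t| ≤ |b| := by
    have h := (hRN t).2 a ha
    rw [hx]
    have : |a - t| = |b| := by rw [htdef, show a - (a+b) = -b by ring, abs_neg]
    rw [← this]
    exact h
  by_cases hsmall : |t| < 2 ^ ((p:ℤ) + eb)
  · -- t itself is a float, so x = t and x - a = b
    have hK : |ka + mb| < 2 ^ p :=
      abs_lt_pow_of p (ka + mb) eb (by rw [← htmult]; exact hsmall)
    have htf : FloatRep p t := ⟨ka + mb, eb, hK, htmult⟩
    have : x = t := by rw [hx, rn_fix p RN hRN t htf]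
    rw [this, htdef]
    have : a + b - a = b := by ring
    rw [this, hbeq]
    exact ⟨mb, eb, hmb, rfl⟩
  · push_neg at hsmall
    obtain ⟨k', hk'⟩ := rn_grid p hp RN hRN (ka + mb) eb t htmult hsmall
    rw [← hx] at hk'
    have ht0 : t ≠ 0 := by
      intro h; rw [h, abs_zero] at hsmall
      exact absurd hsmall (not_le.mpr (two_zpow_pos _))
    by_cases hea : eb + 1 ≤ ea
    · -- a is a multiple of 2^(eb+1); |x - a| ≤ 2|b| < 2^p * 2^(eb+1)
      obtain ⟨ka', hka'⟩ := mult_shift ma ea (eb + 1) hea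
      have hxa : x - a = ((k' - ka' : ℤ):ℝ) * 2 ^ (eb + 1) := by
        rw [hk', haeq, hka']; push_cast; ring
      have hbound : |x - a| ≤ 2 * |b| := by
        have h1 : |x - a| ≤ |x - t| + |t - a| := abs_sub_le x t a
        have h2 : |t - a| = |b| := by rw [htdef, show a + b - a = b by ring]
        rw [h2] at h1
        linarith
      have hKb : |k' - ka'| < 2 ^ p := by
        apply abs_lt_pow_of p (k' - ka') (eb + 1)
        rw [← hxa]
        calc |x - a| ≤ 2 * |b| := hbound
          _ < 2 * 2 ^ ((p:ℤ) + eb) := by linarith [hbhigh]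
          _ = 2 ^ ((p:ℤ) + (eb + 1)) := by
              rw [show (p:ℤ) + (eb + 1) = ((p:ℤ) + eb) + 1 by ring,
                zpow_add2 ((p:ℤ) + eb) 1, zpow_one]; ring
      exact ⟨k' - ka', eb + 1, hKb, hxa⟩
    · push_neg at hea
      have heaeq : ea = eb := by omega
      subst heaeq
      -- x - a = (2k' - ma) * 2^ea
      have hxa : x - a = ((2 * k' - ma : ℤ):ℝ) * 2 ^ ea := by
        rw [hk', haeq, show ea + 1 = 1 + ea by ring, zpow_add2]
        push_cast; ring
      set E := Int.log 2 |t| with hEdef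
      have hhalf : |x - t| ≤ 2 ^ (E - p) := by
        rw [hx]; exact rn_half_ulp p hp RN hRN t ht0
      have hEu : |t| < 2 ^ (E + 1) := Int.lt_zpow_succ_log_self one_lt_two |t|
      have hEub : E ≤ (p:ℤ) + ea := by
        have h1 : |t| ≤ |a| + |b| := abs_add_le a b
        have h2 : |t| < 2 ^ ((p:ℤ) + ea) + 2 ^ ((p:ℤ) + ea) := by
          calc |t| ≤ |a| + |b| := h1
            _ < 2 ^ ((p:ℤ) + ea) + 2 ^ ((p:ℤ) + ea) := by
                have := lt_of_le_of_lt hab hahigh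
                linarith [hahigh]
        have h3 : |t| < 2 ^ ((p:ℤ) + ea + 1) := by
          rw [zpow_add2 ((p:ℤ) + ea) 1]; linarith [h2]
        have hEl : (2:ℝ) ^ E ≤ |t| := Int.zpow_log_le_self one_lt_two (abs_pos.mpr ht0)
        have := zpow_lt_iff.mp (lt_of_le_of_lt hEl h3); omega
      have hhalf2 : |x - t| ≤ 2 ^ ea := by
        refine hhalf.trans ?_
        have : E - (p:ℤ) ≤ ea := by omega
        exact (zpow_le_zpow_iff_right₀ (by norm_num : (1:ℝ) < 2)).mpr this
      have hbR : |b| ≤ (2 ^ (p:ℤ) - 1) * 2 ^ ea := by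
        rw [hbeq, abs_float_eq]
        exact mul_le_mul_of_nonneg_right (abs_cast_le p mb hmb) (two_zpow_pos ea).le
      have hKb : |2 * k' - ma| ≤ 2 ^ p := by
        apply abs_le_pow_of p (2 * k' - ma) ea
        rw [← hxa]
        have h1 : |x - a| ≤ |x - t| + |t - a| := abs_sub_le x t a
        have h2 : |t - a| = |b| := by rw [htdef, show a + b - a = b by ring]
        rw [h2] at h1
        have : |x - a| ≤ 2 ^ ea + (2 ^ (p:ℤ) - 1) * 2 ^ ea := by linarith
        calc |x - a| ≤ 2 ^ ea + (2 ^ (p:ℤ) - 1) * 2 ^ ea := this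
          _ = 2 ^ ((p:ℤ) + ea) := by rw [zpow_add2]; ring
      have := floatRep_of_le p hp (2 * k' - ma) ea hKb
      rwa [← hxa] at this
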